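/- arXiv:1801.06206 — 6 statements merged into one kernel-verified Lean document; each statement's English description precedes it below -/
import Mathlib

section
/- Every conditionally convergent series has a subseries diverging by oscillation: there exists A ⊆ ℕ such that limsup_m ∑_{n ∈ A ∩ [0,m]} aₙ = +∞ and liminf_m ∑_{n ∈ A ∩ [0,m]} aₙ = −∞. -/
open Filter Topology

namespace Osc
open scoped Classical
noncomputable def posp (a : ℕ → ℝ) (n : ℕ) : ℝ := if 0 ≤ a n then a n else 0
noncomputable def negp (a : ℕ → ℝ) (n : ℕ) : ℝ := if 0 ≤ a n then 0 else a n

lemma posp_eq (a : ℕ → ℝ) (n : ℕ) : posp a n = (a n + |a n|) / 2 := by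
  unfold posp; rcases le_or_gt 0 (a n) with h | h
  · rw [if_pos h, abs_of_nonneg h]; ring
  · rw [if_neg (not_le.2 h), abs_of_neg h]; ring

lemma negp_eq (a : ℕ → ℝ) (n : ℕ) : negp a n = (a n - |a n|) / 2 := by
  unfold negp; rcases le_or_gt 0 (a n) with h | h
  · rw [if_pos h, abs_of_nonneg h]; ring
  · rw [if_neg (not_le.2 h), abs_of_neg h]; ring

noncomputable def nextP (a : ℕ → ℝ) (s : ℕ) (T : ℝ) : ℕ :=
  if h : ∃ m, s < m ∧ T ≤ ∑ n ∈ Finset.Ico s m, posp a n then h.choose else s + 1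

noncomputable def nextN (a : ℕ → ℝ) (s : ℕ) (T : ℝ) : ℕ :=
  if h : ∃ m, s < m ∧ ∑ n ∈ Finset.Ico s m, negp a n ≤ T then h.choose else s + 1

lemma lt_nextP (a : ℕ → ℝ) (s : ℕ) (T : ℝ) : s < nextP a s T := by
  unfold nextP; split
  · next h => exact h.choose_spec.1
  · omega

lemma lt_nextN (a : ℕ → ℝ) (s : ℕ) (T : ℝ) : s < nextN a s T := by
  unfold nextN; split
  · next h => exact h.choose_spec.1
  · omega

noncomputable def st (a : ℕ → ℝ) : ℕ → ℕ × ℝ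
  | 0 => (0, 0)
  | k + 1 =>
    let p := st a k
    if Even k then
      (nextP a p.1 ((k + 1 : ℝ) - p.2),
        p.2 + ∑ n ∈ Finset.Ico p.1 (nextP a p.1 ((k + 1 : ℝ) - p.2)), posp a n)
    else
      (nextN a p.1 (-(k + 1 : ℝ) - p.2),
        p.2 + ∑ n ∈ Finset.Ico p.1 (nextN a p.1 (-(k + 1 : ℝ) - p.2)), negp a n)

lemma st_lt (a : ℕ → ℝ) (k : ℕ) : (st a k).1 < (st a (k + 1)).1 := by
  rw [st]; split
  · exact lt_nextP a _ _
  · exact lt_nextN a _ _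

lemma st_strictMono (a : ℕ → ℝ) : StrictMono fun k => (st a k).1 :=
  strictMono_nat_of_lt_succ (st_lt a)

lemma st_ge (a : ℕ → ℝ) (k : ℕ) : k ≤ (st a k).1 := by
  induction k with
  | zero => simp
  | succ k ih => have := st_lt a k; omega

def Aset (a : ℕ → ℝ) : Set ℕ :=
  {n | ∃ k, (st a k).1 ≤ n ∧ n < (st a (k + 1)).1 ∧ (if Even k then 0 ≤ a n else a n < 0)}

lemma stage_unique (a : ℕ → ℝ) {n j k : ℕ} (hj : (st a j).1 ≤ n ∧ n < (st a (j + 1)).1)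
    (hk : (st a k).1 ≤ n ∧ n < (st a (k + 1)).1) : j = k := by
  by_contra hne
  rcases Nat.lt_or_ge j k with hlt | hge
  · have := (st_strictMono a).monotone (show j + 1 ≤ k by omega); omega
  · have : j ≠ k := hne
    have := (st_strictMono a).monotone (show k + 1 ≤ j by omega); omega

lemma indicator_eq (a : ℕ → ℝ) {n k : ℕ} (h1 : (st a k).1 ≤ n) (h2 : n < (st a (k + 1)).1) :
    Set.indicator (Aset a) a n = if Even k then posp a n else negp a n := by
  by_cases hev : Even k
  · rw [if_pos hev]
    unfold posp
    by_cases hp : 0 ≤ a n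
    · rw [if_pos hp, Set.indicator_of_mem]
      exact ⟨k, h1, h2, by simp [hev, hp]⟩
    · rw [if_neg hp, Set.indicator_of_notMem]
      rintro ⟨j, hj1, hj2, hj3⟩
      have := stage_unique a ⟨hj1, hj2⟩ ⟨h1, h2⟩
      subst this
      rw [if_pos hev] at hj3; exact hp hj3
  · rw [if_neg hev]
    unfold negp
    by_cases hp : 0 ≤ a n
    · rw [if_pos hp, Set.indicator_of_notMem]
      rintro ⟨j, hj1, hj2, hj3⟩
      have := stage_unique a ⟨hj1, hj2⟩ ⟨h1, h2⟩
      subst this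
      rw [if_neg hev] at hj3; exact absurd hp (not_le.2 hj3)
    · rw [if_neg hp, Set.indicator_of_mem]
      exact ⟨k, h1, h2, by simp [hev, not_le.1 hp]⟩



lemma nextP_spec (a : ℕ → ℝ) (s : ℕ) (T : ℝ)
    (hex : ∃ m, s < m ∧ T ≤ ∑ n ∈ Finset.Ico s m, posp a n) :
    T ≤ ∑ n ∈ Finset.Ico s (nextP a s T), posp a n := by
  unfold nextP; rw [dif_pos hex]; exact hex.choose_spec.2

lemma nextN_spec (a : ℕ → ℝ) (s : ℕ) (T : ℝ)
    (hex : ∃ m, s < m ∧ ∑ n ∈ Finset.Ico s m, negp a n ≤ T) :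
    ∑ n ∈ Finset.Ico s (nextN a s T), negp a n ≤ T := by
  unfold nextN; rw [dif_pos hex]; exact hex.choose_spec.2

lemma st_fst_even (a : ℕ → ℝ) {k : ℕ} (hev : Even k) :
    (st a (k + 1)).1 = nextP a (st a k).1 ((k + 1 : ℝ) - (st a k).2) := by
  rw [st]; simp [hev]

lemma st_snd_even (a : ℕ → ℝ) {k : ℕ} (hev : Even k) :
    (st a (k + 1)).2 = (st a k).2 + ∑ n ∈ Finset.Ico (st a k).1 (st a (k + 1)).1, posp a n := by
  conv_lhs => rw [st]
  simp only [hev, if_true]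
  rw [st_fst_even a hev]

lemma st_fst_odd (a : ℕ → ℝ) {k : ℕ} (hev : ¬ Even k) :
    (st a (k + 1)).1 = nextN a (st a k).1 (-(k + 1 : ℝ) - (st a k).2) := by
  rw [st]; simp [hev]

lemma st_snd_odd (a : ℕ → ℝ) {k : ℕ} (hev : ¬ Even k) :
    (st a (k + 1)).2 = (st a k).2 + ∑ n ∈ Finset.Ico (st a k).1 (st a (k + 1)).1, negp a n := by
  conv_lhs => rw [st]
  simp only [hev, if_false]
  rw [st_fst_odd a hev]

lemma sum_eq (a : ℕ → ℝ) (k : ℕ) :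
    ∑ n ∈ Finset.range (st a k).1, Set.indicator (Aset a) a n = (st a k).2 := by
  induction k with
  | zero => simp [st]
  | succ k ih =>
    have hle : (st a k).1 ≤ (st a (k + 1)).1 := (st_lt a k).le
    rw [Finset.range_eq_Ico, ← Finset.sum_Ico_consecutive _ (Nat.zero_le _) hle,
      ← Finset.range_eq_Ico, ih]
    have hIco : ∑ n ∈ Finset.Ico (st a k).1 (st a (k + 1)).1, Set.indicator (Aset a) a n =
        ∑ n ∈ Finset.Ico (st a k).1 (st a (k + 1)).1, (if Even k then posp a n else negp a n) := by
      refine Finset.sum_congr rfl fun n hn => ?_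
      rw [Finset.mem_Ico] at hn
      exact indicator_eq a hn.1 hn.2
    rw [hIco]
    by_cases hev : Even k
    · simp only [hev, if_true]
      rw [st_snd_even a hev]
    · simp only [hev, if_false]
      rw [st_snd_odd a hev]

end Osc

/-- Partial sums of the subseries of `a` over the set `A`, up to index `m`. -/
noncomputable def psum (a : ℕ → ℝ) (A : Set ℕ) (m : ℕ) : ℝ :=
  ∑ n ∈ Finset.range (m + 1), Set.indicator A a n

/-- A series `∑ aₙ` is conditionally convergent: its partial sums converge
but the partial sums of `∑ |aₙ|` tend to infinity. -/
def CondConv (a : ℕ → ℝ) : Prop :=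
  (∃ L : ℝ, Tendsto (fun m => ∑ n ∈ Finset.range m, a n) atTop (𝓝 L)) ∧
  Tendsto (fun m => ∑ n ∈ Finset.range m, |a n|) atTop atTop
theorem stmt2 (a : ℕ → ℝ) (h : CondConv a) :
    ∃ A : Set ℕ,
      Filter.limsup (fun m => ((psum a A m : ℝ) : EReal)) atTop = ⊤ ∧
      Filter.liminf (fun m => ((psum a A m : ℝ) : EReal)) atTop = ⊥ := by
  classical
  obtain ⟨⟨L, hL⟩, hT⟩ := h
  -- partial sums of posp tend to atTop
  have hpos : Tendsto (fun m => ∑ n ∈ Finset.range m, Osc.posp a n) atTop atTop := by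
    have : (fun m => ∑ n ∈ Finset.range m, Osc.posp a n) =
        fun m => ((∑ n ∈ Finset.range m, a n) + ∑ n ∈ Finset.range m, |a n|) / 2 := by
      funext m
      rw [← Finset.sum_add_distrib, Finset.sum_div]
      exact Finset.sum_congr rfl fun n _ => Osc.posp_eq a n
    rw [this]
    exact (hL.add_atTop hT).atTop_div_const two_pos
  have hneg : Tendsto (fun m => ∑ n ∈ Finset.range m, Osc.negp a n) atTop atBot := by
    have : (fun m => ∑ n ∈ Finset.range m, Osc.negp a n) =
        fun m => ((∑ n ∈ Finset.range m, a n) - ∑ n ∈ Finset.range m, |a n|) / 2 := by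
      funext m
      rw [← Finset.sum_sub_distrib, Finset.sum_div]
      exact Finset.sum_congr rfl fun n _ => Osc.negp_eq a n
    rw [this]
    simp only [sub_eq_add_neg]
    exact (hL.add_atBot (tendsto_neg_atTop_atBot.comp hT)).atBot_div_const two_pos
  -- existence of next breakpoints
  have hexP : ∀ (s : ℕ) (T : ℝ), ∃ m, s < m ∧ T ≤ ∑ n ∈ Finset.Ico s m, Osc.posp a n := by
    intro s T
    obtain ⟨m, hm1, hm2⟩ :=
      ((hpos.eventually_ge_atTop (T + ∑ n ∈ Finset.range s, Osc.posp a n)).and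
        (eventually_ge_atTop (s + 1))).exists
    refine ⟨m, by omega, ?_⟩
    rw [Finset.sum_Ico_eq_sub _ (by omega : s ≤ m)]
    linarith
  have hexN : ∀ (s : ℕ) (T : ℝ), ∃ m, s < m ∧ ∑ n ∈ Finset.Ico s m, Osc.negp a n ≤ T := by
    intro s T
    obtain ⟨m, hm1, hm2⟩ :=
      ((hneg.eventually_le_atBot (T + ∑ n ∈ Finset.range s, Osc.negp a n)).and
        (eventually_ge_atTop (s + 1))).exists
    refine ⟨m, by omega, ?_⟩
    rw [Finset.sum_Ico_eq_sub _ (by omega : s ≤ m)]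
    linarith
  -- bounds on the running sums
  have hbound : ∀ k : ℕ, (Even k → (k + 1 : ℝ) ≤ (Osc.st a (k + 1)).2) ∧
      (¬ Even k → (Osc.st a (k + 1)).2 ≤ -(k + 1 : ℝ)) := by
    intro k
    constructor
    · intro hev
      rw [Osc.st_snd_even a hev, Osc.st_fst_even a hev]
      have := Osc.nextP_spec a (Osc.st a k).1 ((k + 1 : ℝ) - (Osc.st a k).2) (hexP _ _)
      linarith
    · intro hev
      rw [Osc.st_snd_odd a hev, Osc.st_fst_odd a hev]
      have := Osc.nextN_spec a (Osc.st a k).1 (-(k + 1 : ℝ) - (Osc.st a k).2) (hexN _ _)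
      linarith
  refine ⟨Osc.Aset a, ?_, ?_⟩
  · rw [EReal.eq_top_iff_forall_lt]
    intro y
    have key : ∃ᶠ m in atTop, ((y + 1 : ℝ) : EReal) ≤ ((psum a (Osc.Aset a) m : ℝ) : EReal) := by
      rw [frequently_atTop]
      intro M
      set k := 2 * (Nat.ceil (y + 1) + M) with hk
      have hev : Even k := ⟨Nat.ceil (y + 1) + M, by omega⟩
      have hb : k + 1 ≤ (Osc.st a (k + 1)).1 := Osc.st_ge a (k + 1)
      refine ⟨(Osc.st a (k + 1)).1 - 1, by omega, ?_⟩
      have hpsum : psum a (Osc.Aset a) ((Osc.st a (k + 1)).1 - 1) = (Osc.st a (k + 1)).2 := by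
        rw [psum, show (Osc.st a (k + 1)).1 - 1 + 1 = (Osc.st a (k + 1)).1 by omega]
        exact Osc.sum_eq a (k + 1)
      rw [hpsum, EReal.coe_le_coe_iff]
      have h1 := (hbound k).1 hev
      have h2 : (y + 1 : ℝ) ≤ (k + 1 : ℝ) := by
        have := Nat.le_ceil (y + 1)
        have : (Nat.ceil (y + 1) : ℝ) ≤ (k : ℝ) := by
          exact_mod_cast Nat.le_of_lt_succ (by omega)
        linarith [Nat.le_ceil (y + 1)]
      linarith
    calc (y : EReal) < ((y + 1 : ℝ) : EReal) := by
          exact_mod_cast (lt_add_one y)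
      _ ≤ _ := le_limsup_of_frequently_le' key
  · rw [EReal.eq_bot_iff_forall_lt]
    intro y
    have key : ∃ᶠ m in atTop, ((psum a (Osc.Aset a) m : ℝ) : EReal) ≤ ((y - 1 : ℝ) : EReal) := by
      rw [frequently_atTop]
      intro M
      set k := 2 * (Nat.ceil (1 - y) + M) + 1 with hk
      have hev : ¬ Even k := by
        rw [hk]; simp [Nat.even_add_one, parity_simps]
      have hb : k + 1 ≤ (Osc.st a (k + 1)).1 := Osc.st_ge a (k + 1)
      refine ⟨(Osc.st a (k + 1)).1 - 1, by omega, ?_⟩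
      have hpsum : psum a (Osc.Aset a) ((Osc.st a (k + 1)).1 - 1) = (Osc.st a (k + 1)).2 := by
        rw [psum, show (Osc.st a (k + 1)).1 - 1 + 1 = (Osc.st a (k + 1)).1 by omega]
        exact Osc.sum_eq a (k + 1)
      rw [hpsum, EReal.coe_le_coe_iff]
      have h1 := (hbound k).2 hev
      have h2 : (1 - y : ℝ) ≤ (k + 1 : ℝ) := by
        have : (Nat.ceil (1 - y) : ℝ) ≤ (k : ℝ) := by
          exact_mod_cast Nat.le_of_lt_succ (by omega)
        linarith [Nat.le_ceil (1 - y)]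
      linarith
    calc Filter.liminf (fun m => ((psum a (Osc.Aset a) m : ℝ) : EReal)) atTop
        ≤ ((y - 1 : ℝ) : EReal) := liminf_le_of_frequently_le' key
      _ < (y : EReal) := by exact_mod_cast (sub_one_lt y)
end

section
/- For any conditionally convergent series ∑ aₙ and any k ∈ ℕ, the set U_k = { A ⊆ ℕ : ∑_{n ∈ A ∩ [0,m]} aₙ ≥ k for some m } is open and dense in the Cantor space 2^ℕ (identifying subsets of ℕ with their characteristic functions). -/
open Filter Topology

lemma pos_part_tendsto (a : ℕ → ℝ) (h : CondConv a) :
    Tendsto (fun m => ∑ n ∈ Finset.range m, max (a n) 0) atTop atTop := by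
  obtain ⟨⟨L, hL⟩, hT⟩ := h
  have key : ∀ m, ∑ n ∈ Finset.range m, max (a n) 0
      = ((∑ n ∈ Finset.range m, a n) + ∑ n ∈ Finset.range m, |a n|) / 2 := by
    intro m
    rw [← Finset.sum_add_distrib, Finset.sum_div]
    refine Finset.sum_congr rfl fun n _ => ?_
    rcases le_total (a n) 0 with hn | hn
    · rw [abs_of_nonpos hn, max_eq_right hn]; ring
    · rw [abs_of_nonneg hn, max_eq_left hn]; ring
  simp only [key]
  exact Tendsto.atTop_div_const two_pos (hL.add_atTop hT)

theorem stmt5 (a : ℕ → ℝ) (h : CondConv a) (k : ℕ) :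
    IsOpen {s : ℕ → Bool |
      ∃ m, (k : ℝ) ≤ ∑ n ∈ Finset.range (m + 1), if s n then a n else 0} ∧
    Dense {s : ℕ → Bool |
      ∃ m, (k : ℝ) ≤ ∑ n ∈ Finset.range (m + 1), if s n then a n else 0} := by
  constructor
  · have heq : {s : ℕ → Bool |
        ∃ m, (k : ℝ) ≤ ∑ n ∈ Finset.range (m + 1), if s n then a n else 0}
        = ⋃ m, (fun (s : ℕ → Bool) (i : Fin (m + 1)) => s i) ⁻¹'
          {v : Fin (m + 1) → Bool | (k : ℝ) ≤ ∑ i : Fin (m + 1), if v i then a i else 0} := by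
      ext s
      simp only [Set.mem_setOf_eq, Set.mem_iUnion, Set.mem_preimage]
      constructor <;> rintro ⟨m, hm⟩ <;> exact ⟨m, by rwa [Finset.sum_range] at *⟩
    rw [heq]
    refine isOpen_iUnion fun m => IsOpen.preimage ?_ (isOpen_discrete _)
    exact continuous_pi fun i => continuous_apply (i : ℕ)
  · rw [dense_iff_inter_open]
    rintro U hU ⟨s, hs⟩
    obtain ⟨I, u, hu, hsub⟩ := isOpen_pi_iff.mp hU s hs
    set t : ℕ → Bool := fun n => if n ∈ I then s n else decide (0 < a n) with ht
    set N := I.sup id + 1 with hN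
    have hNI : ∀ n, N ≤ n → n ∉ I := by
      intro n hn hni
      have := Finset.le_sup (f := id) hni
      simp only [id] at this; omega
    set P : ℕ → ℝ := fun j => ∑ n ∈ Finset.range j, max (a n) 0 with hPdef
    set C : ℝ := ∑ n ∈ Finset.range N, (if t n then a n else 0) with hC
    obtain ⟨M, hM⟩ := Filter.eventually_atTop.mp
      ((pos_part_tendsto a h).eventually_ge_atTop ((k : ℝ) - C + P N))
    set m := max N M with hm
    have hNm : N ≤ m + 1 := by omega
    have hico : ∀ n ∈ Finset.Ico N (m + 1), (if t n then a n else 0) = max (a n) 0 := by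
      intro n hn
      have hn' : N ≤ n := (Finset.mem_Ico.mp hn).1
      have : t n = decide (0 < a n) := by simp [ht, hNI n hn']
      rw [this]
      rcases lt_or_ge 0 (a n) with hp | hp
      · simp [hp, max_eq_left hp.le]
      · simp [not_lt.mpr hp, max_eq_right hp]
    have hsplit : ∑ n ∈ Finset.range (m + 1), (if t n then a n else 0)
        = C + (P (m + 1) - P N) := by
      rw [← Finset.sum_range_add_sum_Ico _ hNm, Finset.sum_congr rfl hico,
        Finset.sum_Ico_eq_sub _ hNm]
    refine ⟨t, hsub ?_, ⟨m, ?_⟩⟩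
    · intro i hi
      have hi' : i ∈ I := hi
      simp only [ht, if_pos hi']
      exact (hu i hi').2
    · rw [hsplit]
      have := hM (m + 1) (by omega)
      linarith
end

section
/- Partition ℕ into consecutive intervals I_k where I_k has length 2k. For x assigning to each k a k-element subset x(k) ⊆ I_k, define aˣₙ = 1/k² if n ∈ x(k) and aˣₙ = −1/k² if n ∈ I_k \ x(k). Then for every such x, the series ∑ₙ aˣₙ converges conditionally to 0. -/
open Filter Topology

/-!
On the block `I_k` the series takes the value `1/k²` exactly `k` times and `-1/k²` exactly `k`
times, so its sum over every block vanishes and every partial sum is a partial block sum of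
absolute value at most `2k · 1/k² = 2/k`. The sum of absolute values over `I_k` is `2/k`, so the
series of absolute values dominates twice the harmonic series.
-/

open Finset

section SignedBlock

variable {α M : Type*} [DecidableEq α] {I s : Finset α} {c : M}

theorem Finset.sum_ite_mem_neg_eq_zero [AddCommGroup M] (hs : s ⊆ I) (hcard : #I = 2 * #s) :
    ∑ n ∈ I, (if n ∈ s then c else -c) = 0 := by
  rw [← sum_sdiff hs, sum_ite_of_false fun n hn => (mem_sdiff.1 hn).2,
    sum_ite_of_true fun n hn => hn, sum_const, sum_const, card_sdiff_of_subset hs, hcard,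
    two_mul, Nat.add_sub_cancel, smul_neg, neg_add_cancel]

theorem Finset.sum_abs_ite_mem_neg [AddCommGroup M] [LinearOrder M] [IsOrderedAddMonoid M] :
    ∑ n ∈ I, |if n ∈ s then c else -c| = #I • |c| := by
  simp only [apply_ite, abs_neg, ite_self, sum_const]

end SignedBlock

section Blocks

variable {M : Type*} [AddCommMonoid M] {E : ℕ → ℕ}

theorem Finset.sum_range_eq_add_sum_blocks (hE : Monotone E) (f : ℕ → M) (k : ℕ) :
    ∑ n ∈ range (E k), f n =
      ∑ n ∈ range (E 0), f n + ∑ j ∈ range k, ∑ n ∈ Ico (E j) (E (j + 1)), f n := by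
  induction k with
  | zero => simp
  | succ k ih =>
    rw [sum_range_succ, ← add_assoc, ← ih, sum_range_add_sum_Ico _ (hE k.le_succ)]

theorem StrictMono.exists_le_lt_succ (hE : StrictMono E) {m : ℕ} (hm : E 0 ≤ m) :
    ∃ k, E k ≤ m ∧ m < E (k + 1) := by
  simpa only [not_lt] using Nat.exists_not_and_succ_of_not_zero_of_exists (p := (m < E ·))
    (not_lt.2 hm) ⟨m + 1, (Nat.lt_succ_self m).trans_le (hE.id_le _)⟩

theorem tendsto_sum_range_zero_of_blocks {a : ℕ → ℝ} (hE : StrictMono E) {ε : ℕ → ℝ}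
    (hε : Tendsto ε atTop (𝓝 0)) (hzero : ∀ k, ∑ n ∈ range (E k), a n = 0)
    (hblock : ∀ k, ∑ n ∈ Ico (E k) (E (k + 1)), |a n| ≤ ε k) :
    Tendsto (fun m => ∑ n ∈ range m, a n) atTop (𝓝 0) := by
  rw [Metric.tendsto_atTop] at hε ⊢
  intro δ hδ
  obtain ⟨K, hK⟩ := hε δ hδ
  refine ⟨E K, fun m hm => ?_⟩
  obtain ⟨k, hkm, hmk⟩ := hE.exists_le_lt_succ ((hE.monotone K.zero_le).trans hm)
  have hKk : K ≤ k := Nat.lt_succ_iff.1 (hE.lt_iff_lt.1 (hm.trans_lt hmk))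
  calc dist (∑ n ∈ range m, a n) 0 = |∑ n ∈ Ico (E k) m, a n| := by
        rw [Real.dist_eq, sub_zero, ← sum_range_add_sum_Ico _ hkm, hzero, zero_add]
    _ ≤ ∑ n ∈ Ico (E k) m, |a n| := abs_sum_le_sum_abs _ _
    _ ≤ ∑ n ∈ Ico (E k) (E (k + 1)), |a n| :=
        sum_le_sum_of_subset_of_nonneg (Ico_subset_Ico_right hmk.le) fun _ _ _ => abs_nonneg _
    _ ≤ ε k := hblock k
    _ < δ := (le_abs_self _).trans_lt (by simpa [Real.dist_eq] using hK k hKk)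

theorem tendsto_sum_range_abs_atTop_of_blocks {a : ℕ → ℝ} (hE : Monotone E)
    (hblock : ∀ k, ∑ n ∈ Ico (E k) (E (k + 1)), |a n| = 2 / (k + 1)) :
    Tendsto (fun m => ∑ n ∈ range m, |a n|) atTop atTop := by
  have hmono : Monotone fun m => ∑ n ∈ range m, |a n| := fun _ _ h =>
    sum_le_sum_of_subset_of_nonneg (range_subset_range.2 h) fun _ _ _ => abs_nonneg _
  refine tendsto_atTop_of_monotone_of_subseq hmono (φ := E) (l := atTop) ?_
  have hsub : (fun m => ∑ n ∈ range m, |a n|) ∘ E =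
      fun k => ∑ n ∈ range (E 0), |a n| + 2 * ∑ j ∈ range k, 1 / ((j : ℝ) + 1) := by
    ext k
    rw [Function.comp_apply, sum_range_eq_add_sum_blocks hE, mul_sum]
    exact congrArg _ (sum_congr rfl fun j _ => by rw [hblock, mul_one_div])
  rw [hsub]
  exact tendsto_atTop_add_const_left _ _
    (Real.tendsto_sum_range_one_div_nat_succ_atTop.const_mul_atTop two_pos)

end Blocks

theorem Icc_succ_mul_eq_Ico (k : ℕ) :
    Icc ((k + 1) * (k + 1 - 1) + 1) ((k + 1) * (k + 1 + 1)) =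
      Ico (k * (k + 1) + 1) ((k + 1) * (k + 1 + 1) + 1) := by
  rw [← Ico_add_one_right_eq_Icc, Nat.add_sub_cancel, mul_comm]

theorem card_Ico_succ_mul (k : ℕ) :
    #(Ico (k * (k + 1) + 1) ((k + 1) * (k + 1 + 1) + 1)) = 2 * (k + 1) := by
  have : (k + 1) * (k + 1 + 1) = k * (k + 1) + 2 * (k + 1) := by ring
  rw [Nat.card_Ico]
  omega

theorem stmt7 (x : ℕ → Finset ℕ) (a : ℕ → ℝ)
    (hx : ∀ k, 1 ≤ k → x k ⊆ Finset.Icc (k * (k - 1) + 1) (k * (k + 1)) ∧ (x k).card = k)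
    (ha0 : a 0 = 0)
    (ha : ∀ k, 1 ≤ k → ∀ n ∈ Finset.Icc (k * (k - 1) + 1) (k * (k + 1)),
      a n = if n ∈ x k then 1 / (k : ℝ) ^ 2 else -1 / (k : ℝ) ^ 2) :
    Tendsto (fun m => ∑ n ∈ Finset.range m, a n) atTop (𝓝 0) ∧
    Tendsto (fun m => ∑ n ∈ Finset.range m, |a n|) atTop atTop := by
  -- `Ico (E k) (E (k + 1))` is the block `I_{k+1}`
  set E : ℕ → ℕ := fun k => k * (k + 1) + 1
  have hE : StrictMono E := strictMono_nat_of_lt_succ fun k => by simp only [E]; nlinarith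
  have ha_succ (k : ℕ) : ∀ n ∈ Ico (E k) (E (k + 1)),
      a n = if n ∈ x (k + 1) then 1 / ((k : ℝ) + 1) ^ 2 else -(1 / ((k : ℝ) + 1) ^ 2) := by
    intro n hn
    rw [ha (k + 1) k.succ_pos n (Icc_succ_mul_eq_Ico k ▸ hn), neg_div]
    push_cast
    rfl
  have hsum (k : ℕ) : ∑ n ∈ Ico (E k) (E (k + 1)), a n = 0 := by
    obtain ⟨hs, hcard⟩ := hx (k + 1) k.succ_pos
    rw [sum_congr rfl (ha_succ k)]
    exact sum_ite_mem_neg_eq_zero (Icc_succ_mul_eq_Ico k ▸ hs)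
      (by rw [hcard]; exact card_Ico_succ_mul k)
  have habs (k : ℕ) : ∑ n ∈ Ico (E k) (E (k + 1)), |a n| = 2 / (k + 1) := by
    rw [sum_congr rfl fun n hn => congrArg abs (ha_succ k n hn), sum_abs_ite_mem_neg,
      card_Ico_succ_mul, nsmul_eq_mul, abs_of_pos (by positivity)]
    push_cast
    field_simp
  refine ⟨tendsto_sum_range_zero_of_blocks hE ?_ (fun k => ?_) (fun k => (habs k).le),
    tendsto_sum_range_abs_atTop_of_blocks hE.monotone habs⟩
  · simpa only [mul_one_div, mul_zero] using
      tendsto_one_div_add_atTop_nhds_zero_nat.const_mul (2 : ℝ)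
  · rw [sum_range_eq_add_sum_blocks hE.monotone]
    simp [E, ha0, hsum]
end

section
/- Let (cₙ) be a sequence of reals with ∑ cₙ² < ∞. Then for almost every s ∈ 2^ℕ (with respect to the fair-coin product measure), the series ∑ₙ (−1)^{s(n)} cₙ converges. -/
open Filter Topology

/-!
The signs `εₙ(s) = (-1)^{s(n)}` are independent and centred under `μ`, so the partial sums
of `∑ εₙ cₙ` form a martingale. By independence its second moments are `∑_{n<m} cₙ²`, so it
is bounded in L², hence in L¹, and the martingale convergence theorem gives almost sure
convergence (Kolmogorov's one-series theorem).
-/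

open MeasureTheory ProbabilityTheory

namespace ProbabilityTheory

variable {Ω : Type*} {mΩ : MeasurableSpace Ω} {μ : Measure Ω}

lemma eLpNorm_two_sq_eq_evariance_of_integral_eq_zero {X : Ω → ℝ} (hX : μ[X] = 0) :
    eLpNorm X 2 μ ^ 2 = evariance X μ := by
  have := eLpNorm_nnreal_pow_eq_lintegral (μ := μ) (f := X) (p := 2) two_ne_zero
  rw [evariance, hX]
  simpa [ENNReal.rpow_two] using this

section IndepSum

variable {X : ℕ → Ω → ℝ} (hXm : ∀ n, StronglyMeasurable (X n)) (hX : iIndepFun X μ)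

include hX in
/-- `Filtration.natural X` at time `n` already contains `X n`, hence the sums over
`range (n + 1)`. -/
lemma iIndepFun.martingale_partialSum (hint : ∀ n, Integrable (X n) μ)
    (h0 : ∀ n, μ[X n] = 0) :
    Martingale (fun n ω => ∑ k ∈ Finset.range (n + 1), X k ω) (Filtration.natural X hXm) μ := by
  have := hX.isProbabilityMeasure
  refine martingale_of_condExp_sub_eq_zero_nat (fun n => ?_)
    (fun n => integrable_finsetSum _ fun k _ => hint k) (fun n => ?_)
  · refine Finset.stronglyMeasurable_fun_sum _ fun k hk => ?_
    exact (Filtration.stronglyAdapted_natural hXm k).mono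
      ((Filtration.natural X hXm).mono (Nat.lt_succ_iff.mp (Finset.mem_range.mp hk)))
  · have hincr : (fun ω => ∑ k ∈ Finset.range (n + 1 + 1), X k ω) -
        (fun ω => ∑ k ∈ Finset.range (n + 1), X k ω) = X (n + 1) := by
      ext ω; simp [Finset.sum_range_succ _ (n + 1)]
    rw [hincr]
    exact (hX.condExp_natural_ae_eq_of_lt hXm n.lt_succ_self).trans (by simp [h0]; rfl)

include hX in
lemma iIndepFun.eLpNorm_sum_le (hL2 : ∀ n, MemLp (X n) 2 μ) (h0 : ∀ n, μ[X n] = 0)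
    (hvar : Summable fun n => Var[X n; μ]) (s : Finset ℕ) :
    eLpNorm (fun ω => ∑ k ∈ s, X k ω) 2 μ ≤ ENNReal.ofReal √(∑' n, Var[X n; μ]) := by
  have := hX.isProbabilityMeasure
  have hmean : μ[fun ω => ∑ k ∈ s, X k ω] = 0 := by
    rw [integral_finsetSum _ fun k _ => (hL2 k).integrable one_le_two]
    exact Finset.sum_eq_zero fun k _ => h0 k
  have hsq : eLpNorm (fun ω => ∑ k ∈ s, X k ω) 2 μ ^ 2 ≤
      ENNReal.ofReal √(∑' n, Var[X n; μ]) ^ 2 := by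
    rw [eLpNorm_two_sq_eq_evariance_of_integral_eq_zero hmean,
      ← (memLp_finsetSum s fun k _ => hL2 k).ofReal_variance_eq, ← Finset.sum_fn,
      IndepFun.variance_sum (fun k _ => hL2 k) fun i _ j _ hij => hX.indepFun hij,
      ← ENNReal.ofReal_pow (Real.sqrt_nonneg _),
      Real.sq_sqrt (tsum_nonneg fun n => variance_nonneg _ _)]
    exact ENNReal.ofReal_le_ofReal (hvar.sum_le_tsum s fun n _ => variance_nonneg _ _)
  exact (ENNReal.pow_le_pow_left_iff two_ne_zero).mp hsq

include hXm hX in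
theorem iIndepFun.ae_exists_tendsto_sum (hL2 : ∀ n, MemLp (X n) 2 μ) (h0 : ∀ n, μ[X n] = 0)
    (hvar : Summable fun n => Var[X n; μ]) :
    ∀ᵐ ω ∂μ, ∃ L, Tendsto (fun m => ∑ k ∈ Finset.range m, X k ω) atTop (𝓝 L) := by
  have := hX.isProbabilityMeasure
  have hbdd (n : ℕ) : eLpNorm (fun ω => ∑ k ∈ Finset.range (n + 1), X k ω) 1 μ ≤
      (√(∑' n, Var[X n; μ])).toNNReal :=
    (eLpNorm_le_eLpNorm_of_exponent_le one_le_two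
      (memLp_finsetSum _ fun k _ => hL2 k).aestronglyMeasurable).trans
      (hX.eLpNorm_sum_le hL2 h0 hvar _)
  filter_upwards [(hX.martingale_partialSum hXm (fun n => (hL2 n).integrable one_le_two)
    h0).submartingale.exists_ae_tendsto_of_bdd hbdd] with ω ⟨L, hL⟩
  exact ⟨L, (tendsto_add_atTop_iff_nat 1).mp hL⟩

end IndepSum
end ProbabilityTheory

section CoinTossing

variable {μ : Measure (ℕ → Bool)}

lemma measurableSet_coord_eq_true (n : ℕ) : MeasurableSet {x : ℕ → Bool | x n = true} :=
  measurableSet_eq_fun (measurable_pi_apply n) measurable_const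

lemma measurable_sign_coord_mul (n : ℕ) (a : ℝ) :
    Measurable fun x : ℕ → Bool => (if x n then (-1 : ℝ) else 1) * a :=
  (measurable_of_countable fun b : Bool => (if b then (-1 : ℝ) else 1) * a).comp
    (measurable_pi_apply n)

variable (hμ : ∀ (s : Finset ℕ) (f : ℕ → Bool),
  μ {x : ℕ → Bool | ∀ i ∈ s, x i = f i} = (1 / 2 : ENNReal) ^ s.card)
include hμ

lemma measure_coord_eq_true (n : ℕ) : μ {x | x n = true} = 1 / 2 := by
  simpa using hμ {n} fun _ => true

lemma iIndepSet_coord_eq_true : iIndepSet (fun n => {x : ℕ → Bool | x n = true}) μ := by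
  rw [iIndepSet_iff_meas_biInter measurableSet_coord_eq_true]
  intro s
  simp only [measure_coord_eq_true hμ, Finset.prod_const]
  convert hμ s fun _ => true using 2
  ext x; simp

lemma iIndepFun_coord : iIndepFun (fun n (x : ℕ → Bool) => x n) μ := by
  convert (iIndepSet_coord_eq_true hμ).iIndepFun_indicator (β := ℝ) (m := inferInstance) |>.comp
    (fun _ (t : ℝ) => decide (t = 1)) fun _ =>
      measurable_to_bool (by simp [Set.preimage]) with n x
  by_cases h : x n <;> simp [h]

lemma integral_sign_coord_mul (n : ℕ) (a : ℝ) :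
    ∫ x, (if x n then (-1 : ℝ) else 1) * a ∂μ = 0 := by
  have := (iIndepSet_coord_eq_true hμ).isProbabilityMeasure
  have hsign : (fun x : ℕ → Bool => if x n then (-1 : ℝ) else 1) =
      fun x => 1 - 2 * {x : ℕ → Bool | x n = true}.indicator 1 x := by
    ext x; by_cases h : x n <;> simp [h]; norm_num
  rw [integral_mul_const, hsign, integral_sub (integrable_const _)
    (((integrable_const 1).indicator (measurableSet_coord_eq_true n)).const_mul 2),
    integral_const_mul, integral_indicator_one (measurableSet_coord_eq_true n), measureReal_def,
    measure_coord_eq_true hμ]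
  norm_num

lemma variance_sign_coord_mul (n : ℕ) (a : ℝ) :
    Var[fun x => (if x n then (-1 : ℝ) else 1) * a; μ] = a ^ 2 := by
  have := (iIndepSet_coord_eq_true hμ).isProbabilityMeasure
  rw [variance_of_integral_eq_zero (measurable_sign_coord_mul n a).aemeasurable
    (integral_sign_coord_mul hμ n a)]
  simp

end CoinTossing

open MeasureTheory in
theorem stmt11 (μ : Measure (ℕ → Bool))
    (hμ : ∀ (s : Finset ℕ) (f : ℕ → Bool),
      μ {x : ℕ → Bool | ∀ i ∈ s, x i = f i} = (1 / 2 : ENNReal) ^ s.card)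
    (c : ℕ → ℝ) (hc : Summable (fun n => c n ^ 2)) :
    ∀ᵐ s ∂μ, ∃ L : ℝ,
      Tendsto (fun m => ∑ n ∈ Finset.range m, (if s n then (-1 : ℝ) else 1) * c n)
        atTop (𝓝 L) := by
  have := (iIndepSet_coord_eq_true hμ).isProbabilityMeasure
  have hmeas := fun n => measurable_sign_coord_mul n (c n)
  refine iIndepFun.ae_exists_tendsto_sum (fun n => (hmeas n).stronglyMeasurable)
    ((iIndepFun_coord hμ).comp (fun n (b : Bool) => (if b then (-1 : ℝ) else 1) * c n)
      fun n => measurable_of_countable _)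
    (fun n => MemLp.of_bound (hmeas n).aestronglyMeasurable |c n| (ae_of_all _ fun x => ?_))
    (fun n => integral_sign_coord_mul hμ n (c n))
    (by simpa only [variance_sign_coord_mul hμ] using hc)
  split_ifs <;> simp
end

section
/- Suppose ∑ aₙ is conditionally convergent and A ⊆ ℕ is such that ∑_{n ∈ A} aₙ = +∞. Then there exists a strictly increasing sequence m₁ < m₂ < ⋯ of natural numbers such that for every k, ∑_{n ∈ A ∩ (m_k, m_{k+1}]} aₙ > 1, and moreover ∑_{n ∈ A ∩ (m_k, j]} aₙ > 1 for all j > m_{k+1}. -/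
open Filter Topology

lemma psum_sub (a : ℕ → ℝ) (A : Set ℕ) {m j : ℕ} (h : m ≤ j) :
    ∑ n ∈ Finset.Ioc m j, Set.indicator A a n = psum a A j - psum a A m := by
  unfold psum
  have h1 : Finset.range (m + 1) ∪ Finset.Ioc m j = Finset.range (j + 1) := by
    ext x
    simp only [Finset.mem_union, Finset.mem_range, Finset.mem_Ioc]
    omega
  have h2 : Disjoint (Finset.range (m + 1)) (Finset.Ioc m j) := by
    rw [Finset.disjoint_left]
    intro x hx hx'
    simp only [Finset.mem_range] at hx
    simp only [Finset.mem_Ioc] at hx'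
    omega
  rw [← h1, Finset.sum_union h2]
  ring

theorem stmt14 (a : ℕ → ℝ) (A : Set ℕ) (h : CondConv a)
    (hdiv : Tendsto (psum a A) atTop atTop) :
    ∃ m : ℕ → ℕ, StrictMono m ∧
      (∀ k, (1 : ℝ) < ∑ n ∈ Finset.Ioc (m k) (m (k + 1)), Set.indicator A a n) ∧
      (∀ k, ∀ j, m (k + 1) < j →
        (1 : ℝ) < ∑ n ∈ Finset.Ioc (m k) j, Set.indicator A a n) := by
  have key : ∀ x : ℕ, ∃ y : ℕ, x < y ∧ ∀ j, y ≤ j → psum a A x + 1 < psum a A j := by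
    intro x
    have := (tendsto_atTop.mp hdiv) (psum a A x + 2)
    rw [eventually_atTop] at this
    obtain ⟨N, hN⟩ := this
    refine ⟨max (x + 1) N, by omega, fun j hj => ?_⟩
    have := hN j (le_trans (le_max_right _ _) hj)
    linarith
  choose g hg1 hg2 using key
  refine ⟨fun k => Nat.rec 0 (fun _ p => g p) k, ?_, ?_, ?_⟩
  · apply strictMono_nat_of_lt_succ
    intro k
    exact hg1 _
  · intro k
    rw [psum_sub a A (le_of_lt (hg1 _))]
    have := hg2 (Nat.rec 0 (fun _ p => g p) k) (g (Nat.rec 0 (fun _ p => g p) k)) le_rfl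
    linarith
  · intro k j hj
    have hle : g (Nat.rec 0 (fun _ p => g p) k) ≤ j := le_of_lt hj
    rw [psum_sub a A (le_trans (le_of_lt (hg1 _)) hle)]
    have := hg2 _ j hle
    linarith
end

section
/- Let ∑ aₙ be conditionally convergent with |aₙ| ≤ 1 for all n, and define intervals J_k recursively: J₁ is the largest initial interval with ∑_{n ∈ J₁} |aₙ| ≤ 5, and J_k is the largest interval starting right after J_{k−1} with ∑_{n ∈ J_k} |aₙ| ≤ 5^k. Let P = {n : aₙ ≥ 0} and N = {n : aₙ < 0}. Then lim_{k→∞} (5^k/2 − ∑_{n ∈ J_k ∩ P} aₙ) = 0 and lim_{k→∞} (5^k/2 + ∑_{n ∈ J_k ∩ N} aₙ) = 0. -/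
open Filter Topology

theorem stmt16 (a : ℕ → ℝ) (b : ℕ → ℕ) (h : CondConv a)
    (hbd : ∀ n, |a n| ≤ 1) (hb1 : b 1 = 0)
    (hbmono : ∀ k, 1 ≤ k → b k ≤ b (k + 1))
    (hle : ∀ k, 1 ≤ k → (∑ n ∈ Finset.Ico (b k) (b (k + 1)), |a n|) ≤ (5 : ℝ) ^ k)
    (hmax : ∀ k, 1 ≤ k →
      (5 : ℝ) ^ k < (∑ n ∈ Finset.Ico (b k) (b (k + 1)), |a n|) + |a (b (k + 1))|) :
    Tendsto (fun k => (5 : ℝ) ^ k / 2 -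
        ∑ n ∈ Finset.Ico (b k) (b (k + 1)), Set.indicator {n | 0 ≤ a n} a n)
      atTop (𝓝 0) ∧
    Tendsto (fun k => (5 : ℝ) ^ k / 2 +
        ∑ n ∈ Finset.Ico (b k) (b (k + 1)), Set.indicator {n | a n < 0} a n)
      atTop (𝓝 0) := by
  obtain ⟨⟨L, hL⟩, -⟩ := h
  -- a tends to 0
  have ha : Tendsto a atTop (𝓝 0) := by
    have h1 : Tendsto (fun n => ∑ i ∈ Finset.range (n + 1), a i) atTop (𝓝 L) :=
      hL.comp (tendsto_add_atTop_nat 1)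
    have h2 := h1.sub hL
    rw [sub_self] at h2
    apply h2.congr
    intro n
    rw [Finset.sum_range_succ]
    ring
  -- b is strictly increasing for k ≥ 1
  have hstep : ∀ k, 1 ≤ k → b k < b (k + 1) := by
    intro k hk
    by_contra hcon
    push_neg at hcon
    have heq : b (k + 1) = b k := le_antisymm hcon (hbmono k hk)
    have hm := hmax k hk
    rw [heq, Finset.Ico_self, Finset.sum_empty] at hm
    have h5 : (5 : ℝ) ^ 1 ≤ (5 : ℝ) ^ k := pow_le_pow_right₀ (by norm_num) hk
    have hb := hbd (b k)
    simp only [pow_one] at h5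
    linarith
  have hbk : ∀ k, 1 ≤ k → k ≤ b (k + 1) := by
    intro k hk
    induction k with
    | zero => omega
    | succ n ih =>
      by_cases hn : 1 ≤ n
      · have h1 := ih hn
        have h2 := hstep (n + 1) (by omega)
        omega
      · have h0 : n = 0 := by omega
        subst h0
        have h2 := hstep 1 le_rfl
        simp only [Nat.reduceAdd] at h2 ⊢
        omega
  have htb : Tendsto b atTop atTop := by
    rw [tendsto_atTop]
    intro N
    filter_upwards [eventually_ge_atTop (N + 2)] with k hk
    have h1 := hbk (k - 1) (by omega)
    have hk1 : k - 1 + 1 = k := by omega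
    rw [hk1] at h1
    omega
  have htb1 : Tendsto (fun k => b (k + 1)) atTop atTop :=
    htb.comp (tendsto_add_atTop_nat 1)
  -- the signed block sums tend to 0
  have hg : Tendsto (fun k => ∑ n ∈ Finset.Ico (b k) (b (k + 1)), a n) atTop (𝓝 0) := by
    have h1 : Tendsto (fun k => ∑ n ∈ Finset.range (b (k + 1)), a n) atTop (𝓝 L) :=
      hL.comp htb1
    have h2 : Tendsto (fun k => ∑ n ∈ Finset.range (b k), a n) atTop (𝓝 L) :=
      hL.comp htb
    have h3 := h1.sub h2
    rw [sub_self] at h3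
    apply h3.congr'
    filter_upwards [eventually_ge_atTop 1] with k hk
    exact (Finset.sum_Ico_eq_sub _ (hbmono k hk)).symm
  -- the gap 5^k - (absolute block sum) tends to 0
  have hf : Tendsto (fun k => (5 : ℝ) ^ k - ∑ n ∈ Finset.Ico (b k) (b (k + 1)), |a n|)
      atTop (𝓝 0) := by
    have habs : Tendsto (fun k => |a (b (k + 1))|) atTop (𝓝 0) := by
      have := (ha.comp htb1).abs
      simpa using this
    apply squeeze_zero' ?_ ?_ habs
    · filter_upwards [eventually_ge_atTop 1] with k hk
      have := hle k hk
      linarith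
    · filter_upwards [eventually_ge_atTop 1] with k hk
      have := hmax k hk
      linarith
  -- pointwise decompositions of the indicators
  have keyP : ∀ k, (5 : ℝ) ^ k / 2 -
      (∑ n ∈ Finset.Ico (b k) (b (k + 1)), Set.indicator {n | 0 ≤ a n} a n) =
      ((5 : ℝ) ^ k - ∑ n ∈ Finset.Ico (b k) (b (k + 1)), |a n|) / 2 -
      (∑ n ∈ Finset.Ico (b k) (b (k + 1)), a n) / 2 := by
    intro k
    have hsum : ∑ n ∈ Finset.Ico (b k) (b (k + 1)), Set.indicator {n | 0 ≤ a n} a n =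
        ∑ n ∈ Finset.Ico (b k) (b (k + 1)), ((a n + |a n|) / 2) := by
      apply Finset.sum_congr rfl
      intro n _
      by_cases hn : 0 ≤ a n
      · simp only [Set.indicator_apply, Set.mem_setOf_eq, if_pos hn, abs_of_nonneg hn]; ring
      · simp only [Set.indicator_apply, Set.mem_setOf_eq, if_neg hn,
          abs_of_neg (lt_of_not_ge hn)]; ring
    rw [hsum, ← Finset.sum_div, Finset.sum_add_distrib]
    ring
  have keyN : ∀ k, (5 : ℝ) ^ k / 2 +
      (∑ n ∈ Finset.Ico (b k) (b (k + 1)), Set.indicator {n | a n < 0} a n) =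
      ((5 : ℝ) ^ k - ∑ n ∈ Finset.Ico (b k) (b (k + 1)), |a n|) / 2 +
      (∑ n ∈ Finset.Ico (b k) (b (k + 1)), a n) / 2 := by
    intro k
    have hsum : ∑ n ∈ Finset.Ico (b k) (b (k + 1)), Set.indicator {n | a n < 0} a n =
        ∑ n ∈ Finset.Ico (b k) (b (k + 1)), ((a n - |a n|) / 2) := by
      apply Finset.sum_congr rfl
      intro n _
      by_cases hn : a n < 0
      · simp only [Set.indicator_apply, Set.mem_setOf_eq, if_pos hn, abs_of_neg hn]; ring
      · simp only [Set.indicator_apply, Set.mem_setOf_eq, if_neg hn,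
          abs_of_nonneg (le_of_not_gt hn)]; ring
    rw [hsum, ← Finset.sum_div, Finset.sum_sub_distrib]
    ring
  constructor
  · have hT := (hf.div_const 2).sub (hg.div_const 2)
    have := hT.congr (fun k => (keyP k).symm)
    simpa using this
  · have hT := (hf.div_const 2).add (hg.div_const 2)
    have := hT.congr (fun k => (keyN k).symm)
    simpa using this
end
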